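/- For n ≥ 3, |C′_{n+1}| = (2n−3)·|C′_n|: the map sending v ∈ C′_{n+1} to the pair (u, j), where u ∈ C′_n is obtained by deleting both occurrences of the value n+1 from v (merging the equal flanking entries), and j ∈ {1,...,2n−2} is the position in u at which n+1 was inserted, is a bijection onto the set of pairs (u, j) with u ∈ C′_n and j ≠ i₀(u), where i₀(u) is the unique position of the value n in u. -/

import Mathlib

open Finsupp

/-- The free ℤ-module on sequences (the underlying module of the surjection operad). -/
abbrev FM : Type := List ℕ →₀ ℤ

/-- A sequence is non-degenerate if consecutive entries differ. -/
def Nondeg (u : List ℕ) : Prop := u.Chain' (· ≠ ·)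

/-- `u` has all its values in `{1,…,n}` and attains each of them. -/
def IsSurjSeq (n : ℕ) (u : List ℕ) : Prop :=
  (∀ x ∈ u, x ∈ Finset.Icc 1 n) ∧ ∀ v ∈ Finset.Icc 1 n, v ∈ u

/-- No subsequence of the form (i,j,i,j) with i ≠ j. -/
def NoIJIJ (u : List ℕ) : Prop := ∀ i j : ℕ, i ≠ j → ¬ List.Sublist [i, j, i, j] u

/-- No subsequence of the form (i,j,i) with j = i+1 or j < i. -/
def NoBadIJI (u : List ℕ) : Prop := ∀ i j : ℕ, (j = i + 1 ∨ j < i) → ¬ List.Sublist [i, j, i] u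

/-- A cactus with n lobes in degree k: a non-degenerate surjection
`{1,…,n+k} → {1,…,n}` with no (i,j,i,j) subsequence. -/
def IsCactus (n k : ℕ) (u : List ℕ) : Prop :=
  u.length = n + k ∧ Nondeg u ∧ IsSurjSeq n u ∧ NoIJIJ u

/-- The set C′ₙ: top-degree cacti with no (i,j,i) subsequence with j=i+1 or j<i. -/
def MemC' (n : ℕ) (u : List ℕ) : Prop := IsCactus n (n - 2) u ∧ NoBadIJI u

/-- Does the value at (0-based) index i reappear strictly later in u? -/
def Reoccurs (u : List ℕ) (i : ℕ) : Bool := (u.drop (i+1)).contains (u.getD i 0)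

/-- Relative degree of the prefix of u of length j (number of 0-based indices < j
whose value reappears later in u). -/
def prefDeg (u : List ℕ) (j : ℕ) : ℕ := ((List.range j).filter (fun i => Reoccurs u i)).length

/-- Relative degree of the segment of 0-based indices [a, b-1] of u. -/
def segDeg (u : List ℕ) (a b : ℕ) : ℕ :=
  ((List.range' a (b - a)).filter (fun i => Reoccurs u i)).length

/-- Replace the (0-based) j-th entry u(j) of u by the triple (u(j), w, u(j)). -/
def ringIns (u : List ℕ) (w j : ℕ) : List ℕ :=
  u.take j ++ [u.getD j 0, w, u.getD j 0] ++ u.drop (j+1)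

/-- The largest value occurring in u (the arity n for a surjection onto {1,…,n}). -/
def topVal (u : List ℕ) : ℕ := u.foldr max 0

/-- The degree of a surjection sequence: length minus number of distinct values. -/
def degOf (u : List ℕ) : ℕ := u.length - u.dedup.length

/-- The Berger–Fresse sign exponent for omitting the (0-based) i-th entry. -/
def deltaSignExp (u : List ℕ) (i : ℕ) : ℕ :=
  if Reoccurs u i then prefDeg u i
  else prefDeg u (((List.range i).filter (fun a => u.getD a 0 == u.getD i 0)).getLastD 0 + 1)

/-- The Berger–Fresse differential on a basis sequence. -/
noncomputable def deltaList (u : List ℕ) : FM :=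
  ∑ i ∈ Finset.range u.length,
    if u.count (u.getD i 0) = 1 then 0
    else ((-1 : ℤ) ^ deltaSignExp u i) • Finsupp.single (u.eraseIdx i) 1

/-- The Berger–Fresse differential, extended linearly. -/
noncomputable def deltaFM (x : FM) : FM := x.sum fun u c => c • deltaList u

/-- The white operation u^□ = Σ_{j<i₀} (−1)^{k+|u|_j} ů_j, where i₀ is the position of
the unique occurrence of the top value n and ů_j inserts a lobe n+1 over the j-th entry. -/
noncomputable def sqList (u : List ℕ) : FM :=
  ∑ j ∈ Finset.range (u.idxOf (topVal u)),
    ((-1 : ℤ) ^ (degOf u + prefDeg u j)) • Finsupp.single (ringIns u (topVal u + 1) j) 1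

/-- The black operation u^▪ = −Σ_{j>i₀} (−1)^{k+|u|_j} ů_j. -/
noncomputable def blList (u : List ℕ) : FM :=
  - ∑ j ∈ Finset.Ico (u.idxOf (topVal u) + 1) u.length,
    ((-1 : ℤ) ^ (degOf u + prefDeg u j)) • Finsupp.single (ringIns u (topVal u + 1) j) 1

/-- Linear extension of (−)^□. -/
noncomputable def sqFM (x : FM) : FM := x.sum fun u c => c • sqList u

/-- Linear extension of (−)^▪. -/
noncomputable def blFM (x : FM) : FM := x.sum fun u c => c • blList u

/-- The 0-based positions of the value t in v. -/
def tPositions (v : List ℕ) (t : ℕ) : List ℕ :=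
  (List.range v.length).filter (fun i => v.getD i 0 == t)

/-- Relabelling α(s) = s + t − 1 for the inner factor. -/
def alphaMap (t : ℕ) (l : List ℕ) : List ℕ := l.map (fun s => s + t - 1)

/-- Relabelling β(s) = s for s < t and s + n − 1 for s > t of the outer factor. -/
def betaMap (t nn : ℕ) (l : List ℕ) : List ℕ :=
  l.map (fun s => if s < t then s else s + nn - 1)

/-- The block of u from 1-based position a to b inclusive. -/
def blockSeg (u : List ℕ) (a b : ℕ) : List ℕ := (u.drop (a - 1)).take (b - a + 1)

/-- The q-th piece of v when it is cut at the occurrences of t (whose 0-based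
positions are listed in tp): v = (v₀, t, v₁, t, …, t, v_r). -/
def vPiece (v : List ℕ) (tp : List ℕ) (q : ℕ) : List ℕ :=
  if q = 0 then v.take (tp.getD 0 0)
  else if q = tp.length then v.drop (tp.getD (tp.length - 1) 0 + 1)
  else (v.drop (tp.getD (q-1) 0 + 1)).take (tp.getD q 0 - tp.getD (q-1) 0 - 1)

/-- The Koszul sign exponent Σ_{p ≤ q} deg(u_p)·deg(v_q) for the splitting with
1-based cut points jf = (j₀, …, j_r). -/
def bfSignExp (v : List ℕ) (u : List ℕ) (jf tp : List ℕ) : ℕ :=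
  ∑ p ∈ Finset.Icc 1 tp.length, ∑ q ∈ Finset.Icc p tp.length,
    (segDeg u (jf.getD (p-1) 0 - 1) (jf.getD p 0 - 1)) *
    (if q = tp.length then segDeg v (tp.getD (tp.length - 1) 0) (v.length - 1)
     else segDeg v (tp.getD (q-1) 0) (tp.getD q 0))

/-- The interleaved sequence (βv₀, αu₁, βv₁, …, αu_r, βv_r). -/
def bfResult (v : List ℕ) (t : ℕ) (u : List ℕ) (jf tp : List ℕ) : List ℕ :=
  betaMap t (topVal u) (vPiece v tp 0) ++
  (List.range tp.length).flatMap (fun p =>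
    alphaMap t (blockSeg u (jf.getD p 0) (jf.getD (p+1) 0)) ++
    betaMap t (topVal u) (vPiece v tp (p+1)))

/-- The Berger–Fresse operadic composition v ∘_t u, as a sum over all splittings
1 = j₀ ≤ j₁ ≤ … ≤ j_r = length u with Koszul signs. -/
noncomputable def bfComp (v : List ℕ) (t : ℕ) (u : List ℕ) : FM :=
  ∑ s ∈ Finset.sym (Finset.Icc 1 u.length) ((tPositions v t).length - 1),
    ((-1 : ℤ) ^ bfSignExp v u (1 :: (Multiset.sort s.1 (· ≤ ·) ++ [u.length])) (tPositions v t)) •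
      Finsupp.single
        (bfResult v t u (1 :: (Multiset.sort s.1 (· ≤ ·) ++ [u.length])) (tPositions v t)) 1

/-- Bilinear extension of the Berger–Fresse composition. -/
noncomputable def bfCompFM (x : FM) (t : ℕ) (y : FM) : FM :=
  x.sum fun v c => y.sum fun u d => (c * d) • bfComp v t u

/-- μ on reversed words: the head of the list is the last letter ξ_{n-1}, which is
the outermost operation; `true` stands for □ and `false` for ▪. -/
noncomputable def muW : List Bool → FM
  | [] => 0
  | [b] => Finsupp.single (if b then [2,1] else [1,2]) 1
  | b :: ξ => if b then sqFM (muW ξ) else blFM (muW ξ)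

/-- μ(m_ξ) for a word ξ = (ξ₁,…,ξ_{n-1}) ∈ {□,▪}^{n-1} written in the paper's order. -/
noncomputable def muP (ξ : List Bool) : FM := muW ξ.reverse

/-- Degree-0 (permutation) substitution composition. -/
def permSubst (σ : List ℕ) (t : ℕ) (τ : List ℕ) : List ℕ :=
  σ.flatMap fun s => if s = t then τ.map (· + (t - 1)) else [if s < t then s else s + τ.length - 1]


/-! By `NoBadIJI`, the largest value `m` of a nondegenerate sequence occurs at most once: between
two occurrences there would be a smaller entry. Deleting it, and also one of its two neighbours
when these coincide, leaves a nondegenerate sequence with one value fewer avoiding the same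
patterns; the neighbours cannot both be `m - 1`, as `m-1, m, m-1` is forbidden. By induction on
the number of values, such sequences with values in `{1,…,n}` have length at most `2n - 2` for
`n ≥ 2`.

An element of `C′_{n+1}` has length `2n`, so deleting `n + 1` must remove two entries: `n + 1`
sits in a lobe `a, n+1, a` with `a ≠ n`, and collapsing the lobe gives the unique preimage.
Conversely, inserting a lobe over an entry other than `n` creates no forbidden pattern, since a
pattern through `n + 1` would contain `n + 1` or `n` twice. -/

section
open List

variable {α : Type*}

lemma exists_eq_append_cons_of_count_le_one [DecidableEq α] {w : List α} {m : α} (hm : m ∈ w)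
    (h : w.count m ≤ 1) : ∃ x y, w = x ++ m :: y ∧ m ∉ x ∧ m ∉ y := by
  obtain ⟨x, y, rfl⟩ := append_of_mem hm
  simp only [count_append, count_cons_self] at h
  exact ⟨x, y, rfl, fun hx => by linarith [count_pos_iff.mpr hx],
    fun hy => by linarith [count_pos_iff.mpr hy]⟩

lemma sublist_of_sublist_cons_of_notMem {P l : List α} {m : α} (hm : m ∉ P) (h : P <+ m :: l) :
    P <+ l := by
  rcases sublist_cons_iff.mp h with h | ⟨r, rfl, -⟩
  · exact h
  · simp at hm

lemma sublist_lobe (x y : List α) (a m : α) : x ++ a :: y <+ x ++ a :: m :: a :: y :=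
  (((sublist_cons_self a y).cons m).cons_cons a).append_left x

lemma triple_sublist_lobe (x y : List α) (a m : α) : [a, m, a] <+ x ++ a :: m :: a :: y :=
  ((((nil_sublist y).cons_cons a).cons_cons m).cons_cons a).trans (sublist_append_right x _)

lemma lobe_perm (x y : List α) (a m : α) : x ++ a :: m :: a :: y ~ a :: m :: (x ++ a :: y) :=
  perm_middle.trans (perm_middle.cons a)

lemma mem_lobe_iff {x y : List α} {a m z : α} :
    z ∈ x ++ a :: m :: a :: y ↔ z = m ∨ z ∈ x ++ a :: y := by
  rw [(lobe_perm x y a m).mem_iff]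
  simp only [mem_cons, mem_append]
  tauto

lemma NoIJIJ.of_sublist {w w' : List ℕ} (h : w' <+ w) (hw : NoIJIJ w) : NoIJIJ w' :=
  fun i j hij hs => hw i j hij (hs.trans h)

lemma NoBadIJI.of_sublist {w w' : List ℕ} (h : w' <+ w) (hw : NoBadIJI w) : NoBadIJI w' :=
  fun i j hij hs => hw i j hij (hs.trans h)

lemma nondeg_iff {u : List ℕ} : Nondeg u ↔ u.IsChain (· ≠ ·) := Iff.rfl

lemma nondeg_lobe_iff {x y : List ℕ} {a m : ℕ} :
    Nondeg (x ++ a :: m :: a :: y) ↔ Nondeg (x ++ a :: y) ∧ a ≠ m := by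
  simp only [nondeg_iff, isChain_append, isChain_cons_cons, head?_cons]
  grind

lemma Nondeg.append_or_eq_flanks {x y : List ℕ} {m : ℕ} (h : Nondeg (x ++ m :: y)) :
    Nondeg (x ++ y) ∨ ∃ x' a y', x = x' ++ [a] ∧ y = a :: y' := by
  rcases eq_nil_or_concat' x with rfl | ⟨x', a, rfl⟩
  · exact .inl (isChain_cons.mp h).2
  rcases y with _ | ⟨b, y'⟩
  · rw [append_nil]; exact .inl (isChain_append.mp h).1
  by_cases hab : a = b
  · exact .inr ⟨x', a, y', rfl, hab ▸ rfl⟩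
  · left
    simp only [nondeg_iff, isChain_append, isChain_cons_cons] at h ⊢
    grind

lemma Nondeg.sublist_of_sublist_lobe {P x y : List ℕ} {a m : ℕ} (hP : Nondeg P) (hm : m ∉ P)
    (h : P <+ x ++ a :: m :: a :: y) : P <+ x ++ a :: y := by
  obtain ⟨P₁, P₂, rfl, h₁, h₂⟩ := sublist_append_iff.mp h
  refine Sublist.append h₁ ?_
  have hP₂ : Nondeg P₂ := (isChain_append.mp hP).2.1
  rcases sublist_cons_iff.mp h₂ with h₂ | ⟨r, rfl, hr⟩
  · exact sublist_of_sublist_cons_of_notMem (fun h => hm (by simp [h])) h₂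
  · have hr : r <+ a :: y := sublist_of_sublist_cons_of_notMem (fun h => hm (by simp [h])) hr
    rcases sublist_cons_iff.mp hr with hr | ⟨r', rfl, -⟩
    · exact hr.cons_cons a
    · exact absurd rfl (isChain_cons_cons.mp hP₂).1

lemma Nondeg.notMem_of_cons_top {n : ℕ} {y : List ℕ} (hnd : Nondeg (n :: y))
    (hle : ∀ z ∈ y, z ≤ n) (hbad : NoBadIJI (n :: y)) : n ∉ y := by
  intro hn
  obtain ⟨s, t, rfl⟩ := append_of_mem hn
  rcases s with _ | ⟨d, s⟩
  · exact (isChain_cons_cons.mp hnd).1 rfl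
  · have hd : d ≠ n := fun h => (isChain_cons_cons.mp hnd).1 h.symm
    refine hbad n d (.inr (lt_of_le_of_ne (hle d (by simp)) hd)) ?_
    exact ((singleton_sublist.mpr (by simp)).cons_cons d).cons_cons n

lemma Nondeg.count_top_le_one {n : ℕ} {w : List ℕ} (hnd : Nondeg w) (hle : ∀ z ∈ w, z ≤ n)
    (hbad : NoBadIJI w) : w.count n ≤ 1 := by
  induction w with
  | nil => simp
  | cons c w ih =>
    have hw : w.count n ≤ 1 := ih (isChain_cons.mp hnd).2 (fun z hz => hle z (by simp [hz]))
      (hbad.of_sublist (sublist_cons_self c w))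
    by_cases hc : c = n
    · subst hc
      have hn : c ∉ w := hnd.notMem_of_cons_top (fun z hz => hle z (by simp [hz])) hbad
      simp [count_eq_zero_of_not_mem hn]
    · simpa [count_cons, hc] using hw

lemma Nondeg.length_le {n : ℕ} {w : List ℕ} (hnd : Nondeg w)
    (hw : ∀ z ∈ w, z ∈ Finset.Icc 1 n) (hbad : NoBadIJI w) : w.length ≤ max n (2 * n - 2) := by
  induction n generalizing w with
  | zero =>
    rcases w with _ | ⟨c, w⟩
    · simp
    · simpa using hw c mem_cons_self
  | succ n ih =>
    have hle : ∀ z ∈ w, z ≤ n + 1 := fun z hz => (Finset.mem_Icc.mp (hw z hz)).2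
    by_cases htop : n + 1 ∈ w
    swap
    · refine (ih hnd (fun z hz => ?_) hbad).trans (by omega)
      have := Finset.mem_Icc.mp (hw z hz)
      have : z ≠ n + 1 := fun h => htop (h ▸ hz)
      simp only [Finset.mem_Icc]; omega
    obtain ⟨x, y, rfl, hx, hy⟩ :=
      exists_eq_append_cons_of_count_le_one htop (hnd.count_top_le_one hle hbad)
    have hlow : ∀ z ∈ x ++ y, z ∈ Finset.Icc 1 n := by
      intro z hz
      have := Finset.mem_Icc.mp (hw z (by simp at hz ⊢; tauto))
      have : z ≠ n + 1 := by rintro rfl; simp at hz; tauto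
      simp only [Finset.mem_Icc]; omega
    rcases hnd.append_or_eq_flanks with hxy | ⟨x', a, y', rfl, rfl⟩
    · have := ih hxy hlow (hbad.of_sublist ((sublist_cons_self _ y).append_left x))
      simp only [length_append, length_cons] at this ⊢
      omega
    · simp only [append_assoc, cons_append, nil_append] at *
      have ha : a ≠ n := by
        rintro rfl
        exact hbad a (a + 1) (.inl rfl) (triple_sublist_lobe x' y' a (a + 1))
      have ha' := hlow a (by simp)
      have := ih (nondeg_lobe_iff.mp hnd).1 (fun z hz => hlow z (by simp at hz ⊢; tauto))
        (hbad.of_sublist (sublist_lobe x' y' a (n + 1)))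
      simp only [Finset.mem_Icc] at ha'
      simp only [length_append, length_cons] at this ⊢
      omega

lemma NoIJIJ.lobe {x y : List ℕ} {a m : ℕ} (h : NoIJIJ (x ++ a :: y)) (hm : m ∉ x ++ a :: y) :
    NoIJIJ (x ++ a :: m :: a :: y) := by
  intro i j hij hs
  have hcount : (x ++ a :: m :: a :: y).count m = 1 := by
    have ha : a ≠ m := fun h => hm (by simp [h])
    simp [(lobe_perm x y a m).count_eq, ha, count_eq_zero_of_not_mem hm]
  have hmP : m ∉ [i, j, i, j] := by
    intro hmem
    have := hcount ▸ hs.count_le m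
    simp only [mem_cons, not_mem_nil, or_false] at hmem
    rcases hmem with rfl | rfl | rfl | rfl <;> simp [hij, Ne.symm hij] at this
  have hP : Nondeg [i, j, i, j] := by simp [nondeg_iff, hij, Ne.symm hij]
  exact h i j hij (hP.sublist_of_sublist_lobe hmP hs)

lemma NoBadIJI.lobe {x y : List ℕ} {a n : ℕ} (h : NoBadIJI (x ++ a :: y))
    (hle : ∀ z ∈ x ++ a :: y, z ≤ n) (hcount : (x ++ a :: y).count n ≤ 1) (ha : a ≠ n) :
    NoBadIJI (x ++ a :: (n + 1) :: a :: y) := by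
  intro i j hij hs
  have hperm := lobe_perm x y a (n + 1)
  have hij' : i ≠ j := by omega
  have hP : Nondeg [i, j, i] := by simp [nondeg_iff, hij', Ne.symm hij']
  suffices n + 1 ∉ [i, j, i] from h i j hij (hP.sublist_of_sublist_lobe this hs)
  intro hmem
  obtain rfl | rfl : i = n + 1 ∨ j = n + 1 := by simp at hmem; omega
  · have := hs.count_le (n + 1)
    have hn : n + 1 ∉ x ++ a :: y := fun h => by linarith [hle _ h]
    have ha' : a ≠ n + 1 := fun h => hn (by simp [h])
    simp [hperm.count_eq, ha', Ne.symm hij', count_eq_zero_of_not_mem hn] at this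
  · rcases hij with hij | hlt
    · obtain rfl : i = n := by omega
      have := hs.count_le i
      simp [hperm.count_eq, ha] at this hcount
      omega
    · have hi := hperm.subset (hs.subset (by simp : i ∈ [i, n + 1, i]))
      simp only [mem_cons] at hi
      rcases hi with rfl | rfl | hi
      · linarith [hle i (by simp)]
      · omega
      · linarith [hle i hi]

lemma ringIns_append_length (x y : List ℕ) (a w : ℕ) :
    ringIns (x ++ a :: y) w x.length = x ++ a :: w :: a :: y := by
  simp [ringIns]

lemma exists_eq_append_cons_of_lt_length {u : List ℕ} {j : ℕ} (hj : j < u.length) :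
    ∃ x a y, u = x ++ a :: y ∧ x.length = j :=
  ⟨u.take j, u[j], u.drop (j + 1), by rw [← drop_eq_getElem_cons, take_append_drop],
    by simp; omega⟩

lemma ringIns_inj {u u' : List ℕ} {j j' w : ℕ} (hu : w ∉ u) (hu' : w ∉ u')
    (hj : j < u.length) (hj' : j' < u'.length) (h : ringIns u w j = ringIns u' w j') : u = u' ∧ j = j' := by
  obtain ⟨x, a, y, rfl, rfl⟩ := exists_eq_append_cons_of_lt_length hj
  obtain ⟨x', a', y', rfl, rfl⟩ := exists_eq_append_cons_of_lt_length hj'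
  rw [ringIns_append_length, ringIns_append_length] at h
  have hsplit : ∀ (x y : List ℕ) a, x ++ a :: w :: a :: y = (x ++ [a]) ++ w :: a :: y := by simp
  simp only [mem_append, mem_cons, not_or] at hu
  rw [hsplit, hsplit, append_cons_inj_of_notMem (by simp [hu]) (by simp [hu])] at h
  obtain ⟨hxa, -, hay⟩ := h
  obtain ⟨rfl, ha⟩ := append_inj' hxa rfl
  simp_all

lemma MemC'.le {n : ℕ} {u : List ℕ} (hu : MemC' n u) : ∀ z ∈ u, z ≤ n :=
  fun z hz => (Finset.mem_Icc.mp (hu.1.2.2.1.1 z hz)).2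

lemma MemC'.length_eq {n : ℕ} {u : List ℕ} (hn : 2 ≤ n) (hu : MemC' n u) :
    u.length = 2 * n - 2 := by
  have := hu.1.1; omega

lemma memC'_succ_ringIns {n : ℕ} (hn : 2 ≤ n) {u : List ℕ} {j : ℕ} (hu : MemC' n u)
    (hj : j < u.length) (hne : j ≠ u.idxOf n) : MemC' (n + 1) (ringIns u (n + 1) j) := by
  have hle := hu.le
  obtain ⟨x, a, y, rfl, rfl⟩ := exists_eq_append_cons_of_lt_length hj
  obtain ⟨⟨hlen, hnd, ⟨hval, hsurj⟩, hijij⟩, hbad⟩ := hu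
  have hcount := hnd.count_top_le_one hle hbad
  have ha : a ≠ n := by
    rintro rfl
    simp only [count_append, count_cons_self] at hcount
    have hx : a ∉ x := count_eq_zero.mp (by omega)
    simp [idxOf_append_of_notMem hx] at hne
  have hm : n + 1 ∉ x ++ a :: y := fun h => by linarith [hle _ h]
  rw [ringIns_append_length]
  refine ⟨⟨?_, nondeg_lobe_iff.mpr ⟨hnd, by linarith [hle a (by simp)]⟩, ⟨fun z hz => ?_,
    fun z hz => ?_⟩, hijij.lobe hm⟩, hbad.lobe hle hcount ha⟩
  · simp only [length_append, length_cons] at hlen ⊢; omega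
  · rcases mem_lobe_iff.mp hz with rfl | hz
    · simp
    · have := Finset.mem_Icc.mp (hval z hz)
      simp only [Finset.mem_Icc]; omega
  · rw [mem_lobe_iff]
    by_cases hz' : z = n + 1
    · exact .inl hz'
    · have := Finset.mem_Icc.mp hz
      exact .inr (hsurj z (Finset.mem_Icc.mpr ⟨this.1, by omega⟩))

lemma exists_ringIns_eq {n : ℕ} (hn : 2 ≤ n) {v : List ℕ} (hv : MemC' (n + 1) v) :
    ∃ u j, (MemC' n u ∧ j < 2 * n - 2 ∧ j ≠ u.idxOf n) ∧ ringIns u (n + 1) j = v := by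
  have hle := hv.le
  obtain ⟨⟨hlen, hnd, ⟨hval, hsurj⟩, hijij⟩, hbad⟩ := hv
  have hlow : ∀ z ∈ v, z ≠ n + 1 → z ∈ Finset.Icc 1 n := fun z hz hzn => by
    have := Finset.mem_Icc.mp (hval z hz)
    simp only [Finset.mem_Icc]; omega
  have hshort : ∀ w, w <+ v → Nondeg w → n + 1 ∉ w → w.length ≤ 2 * n - 2 := by
    intro w hw hw' hn1
    refine (hw'.length_le (fun z hz => hlow z (hw.subset hz) ?_) (hbad.of_sublist hw)).trans
      (by omega)
    rintro rfl; exact hn1 hz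
  obtain ⟨x, y, rfl, hx, hy⟩ := exists_eq_append_cons_of_count_le_one
    (hsurj (n + 1) (by simp)) (hnd.count_top_le_one hle hbad)
  rcases hnd.append_or_eq_flanks with hxy | ⟨x, a, y, rfl, rfl⟩
  · have := hshort (x ++ y) ((sublist_cons_self _ y).append_left x) hxy (by simp [hx, hy])
    simp only [length_append, length_cons] at hlen this
    omega
  simp only [append_assoc, cons_append, nil_append] at *
  have hu := sublist_lobe x y a (n + 1)
  have ha : a ≠ n := by
    rintro rfl
    exact hbad a (a + 1) (.inl rfl) (triple_sublist_lobe x y a (a + 1))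
  have hmem : ∀ z ∈ Finset.Icc 1 n, z ∈ x ++ a :: y := fun z hz => by
    have := Finset.mem_Icc.mp hz
    exact (mem_lobe_iff.mp (hsurj z (Finset.mem_Icc.mpr ⟨this.1, by omega⟩))).resolve_left
      (by omega)
  have hlen' : (x ++ a :: y).length = 2 * n - 2 := by
    simp only [length_append, length_cons] at hlen ⊢; omega
  have hval : ∀ z ∈ x ++ a :: y, z ∈ Finset.Icc 1 n := fun z hz =>
    hlow z (hu.subset hz) (by rintro rfl; simp at hx hy hz; tauto)
  have hmemC : MemC' n (x ++ a :: y) :=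
    ⟨⟨by omega, (nondeg_lobe_iff.mp hnd).1, ⟨hval, hmem⟩, hijij.of_sublist hu⟩, hbad.of_sublist hu⟩
  refine ⟨x ++ a :: y, x.length, ⟨hmemC, by rw [← hlen']; simp, fun h => ha ?_⟩,
    ringIns_append_length x y a (n + 1)⟩
  have := getElem_idxOf (idxOf_lt_length_iff.mpr (hmem n (by simp; omega)))
  simpa [← h] using this
end

lemma finite_setOf_length_eq_forall_le (m k : ℕ) :
    {l : List ℕ | l.length = m ∧ ∀ x ∈ l, x ≤ k}.Finite := by
  refine ((List.finite_length_eq (Fin (k + 1)) m).image (List.map Fin.val)).subset ?_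
  rintro l ⟨hl, hk⟩
  refine ⟨l.map (Fin.ofNat (k + 1)), by simpa using hl, ?_⟩
  rw [List.map_map]
  refine (List.map_congr_left (g := id) fun x hx => ?_).trans (List.map_id l)
  simp [Nat.mod_eq_of_lt (Nat.lt_succ_of_le (hk x hx))]

lemma memC'_finite (n : ℕ) : {u : List ℕ | MemC' n u}.Finite :=
  (finite_setOf_length_eq_forall_le (n + (n - 2)) n).subset fun _ hu => ⟨hu.1.1, hu.le⟩

lemma ncard_setOf_pairs_ne {α : Type*} {P : α → Prop} (hP : {u | P u}.Finite) {m : ℕ}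
    (i : α → ℕ) (hi : ∀ u, P u → i u < m) :
    {p : α × ℕ | P p.1 ∧ p.2 < m ∧ p.2 ≠ i p.1}.ncard = (m - 1) * {u | P u}.ncard := by
  classical
  have hset : {p : α × ℕ | P p.1 ∧ p.2 < m ∧ p.2 ≠ i p.1} =
      ↑((hP.toFinset ×ˢ Finset.range m).filter fun p => p.2 ≠ i p.1) := by
    ext; simp [and_assoc]
  rw [hset, Set.ncard_coe_finset, Finset.card_filter, Finset.sum_product,
    Set.ncard_eq_toFinset_card _ hP, mul_comm, ← smul_eq_mul, ← Finset.sum_const]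
  refine Finset.sum_congr rfl fun u hu => ?_
  rw [← Finset.card_filter]
  dsimp only
  rw [Finset.filter_ne', Finset.card_erase_of_mem
    (Finset.mem_range.mpr (hi u (by simpa using hu))), Finset.card_range]

lemma bijOn_ringIns {n : ℕ} (hn : 2 ≤ n) :
    Set.BijOn (fun uj : List ℕ × ℕ => ringIns uj.1 (n + 1) uj.2)
      {uj : List ℕ × ℕ | MemC' n uj.1 ∧ uj.2 < 2 * n - 2 ∧ uj.2 ≠ uj.1.idxOf n}
      {v : List ℕ | MemC' (n + 1) v} := by
  refine ⟨fun uj ⟨hu, hj, hne⟩ => memC'_succ_ringIns hn hu (hu.length_eq hn ▸ hj) hne,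
    ?_, fun v hv => ?_⟩
  · rintro ⟨u, j⟩ ⟨hu, hj, -⟩ ⟨u', j'⟩ ⟨hu', hj', -⟩ h
    have hnotMem : ∀ {u}, MemC' n u → n + 1 ∉ u := fun hu h => by linarith [hu.le _ h]
    obtain ⟨rfl, rfl⟩ := ringIns_inj (hnotMem hu) (hnotMem hu') (hu.length_eq hn ▸ hj)
      (hu'.length_eq hn ▸ hj') h
    rfl
  · obtain ⟨u, j, hD, rfl⟩ := exists_ringIns_eq hn hv
    exact ⟨(u, j), hD, rfl⟩

/-- for n ≥ 3, |C′_{n+1}| = (2n−3)·|C′ₙ|; the insertion map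
(u, j) ↦ ů_j is a bijection from the set of pairs with u ∈ C′ₙ and j a position
other than that of the unique occurrence of n, onto C′_{n+1}. -/
theorem card_C'_recurrence (n : ℕ) (hn : 3 ≤ n) :
    {v : List ℕ | MemC' (n + 1) v}.ncard = (2 * n - 3) * {u : List ℕ | MemC' n u}.ncard ∧
    Set.BijOn (fun uj : List ℕ × ℕ => ringIns uj.1 (n + 1) uj.2)
      {uj : List ℕ × ℕ | MemC' n uj.1 ∧ uj.2 < 2 * n - 2 ∧ uj.2 ≠ uj.1.idxOf n}
      {v : List ℕ | MemC' (n + 1) v} := by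
  have hn2 : 2 ≤ n := by omega
  have hbij := bijOn_ringIns hn2
  refine ⟨?_, hbij⟩
  rw [← hbij.image_eq, hbij.injOn.ncard_image,
    ncard_setOf_pairs_ne (memC'_finite n) _ fun u hu => ?_, Nat.sub_sub]
  rw [← hu.length_eq hn2]
  exact List.idxOf_lt_length_iff.mpr (hu.1.2.2.1.2 n (by simp; omega))
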